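/- For all 3×3 real matrices S, S̃ and all h, h̃ ∈ ℝ³, setting Γ_{ijk} := S_{ij} h_k − S̃_{ij} h̃_k, the three third-order tensors Θ¹ ⋮ Γ, Θ² ⋮ Γ, Θ³ ⋮ Γ are pairwise orthogonal, i.e. Σ_{i,j,k} (Θᵃ ⋮ Γ)_{ijk} (Θᵇ ⋮ Γ)_{ijk} = 0 for all a ≠ b in {1,2,3}, where (Θᵃ ⋮ Γ)_{ijk} := Σ_{l,m,n} Θᵃ_{ijklmn} Γ_{lmn}. -/
import Mathlib


open Matrix

/-- Kronecker delta on `Fin 3`. -/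
def kron (i j : Fin 3) : ℝ := if i = j then 1 else 0

/-- The Levi-Civita tensor on `{1,2,3}³` (with indices in `Fin 3`). -/
def levicivita (i j k : Fin 3) : ℝ :=
  if (i, j, k) = (0, 1, 2) ∨ (i, j, k) = (1, 2, 0) ∨ (i, j, k) = (2, 0, 1) then 1
  else if (i, j, k) = (2, 1, 0) ∨ (i, j, k) = (0, 2, 1) ∨ (i, j, k) = (1, 0, 2) then -1
  else 0

/-- The sixth-order tensor `Θ¹_{ijklmn} = δ_{ij} δ_{lm} δ_{kn}`. -/
def Theta1 (i j k l m n : Fin 3) : ℝ := kron i j * kron l m * kron k n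

/-- The sixth-order tensor `Θ²_{ijklmn} = Υ_{kji} Υ_{nml}`. -/
def Theta2 (i j k l m n : Fin 3) : ℝ := levicivita k j i * levicivita n m l

/-- The sixth-order tensor
`Θ³_{ijklmn} = δ_{il} δ_{mn} δ_{jk} − δ_{mi} δ_{ln} δ_{jk} − δ_{lj} δ_{mn} δ_{ik} + δ_{jm} δ_{ln} δ_{ik}`. -/
def Theta3 (i j k l m n : Fin 3) : ℝ :=
  kron i l * kron m n * kron j k - kron m i * kron l n * kron j k
    - kron l j * kron m n * kron i k + kron j m * kron l n * kron i k


lemma c1 (Γ : Fin 3 → Fin 3 → Fin 3 → ℝ) (i j k : Fin 3) :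
    (∑ l, ∑ m, ∑ n, Theta1 i j k l m n * Γ l m n)
      = kron i j * (Γ 0 0 k + Γ 1 1 k + Γ 2 2 k) := by
  fin_cases k <;> simp [Theta1, kron, Fin.sum_univ_three]

lemma c2 (Γ : Fin 3 → Fin 3 → Fin 3 → ℝ) (i j k : Fin 3) :
    (∑ l, ∑ m, ∑ n, Theta2 i j k l m n * Γ l m n)
      = levicivita k j i * (Γ 2 1 0 + Γ 0 2 1 + Γ 1 0 2 - Γ 0 1 2 - Γ 1 2 0 - Γ 2 0 1) := by
  fin_cases i <;> fin_cases j <;> fin_cases k <;>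
    simp [Theta2, levicivita, Fin.sum_univ_three, Prod.ext_iff] <;> ring

lemma c3 (Γ : Fin 3 → Fin 3 → Fin 3 → ℝ) (i j k : Fin 3) :
    (∑ l, ∑ m, ∑ n, Theta3 i j k l m n * Γ l m n)
      = kron j k * ((Γ i 0 0 + Γ i 1 1 + Γ i 2 2) - (Γ 0 i 0 + Γ 1 i 1 + Γ 2 i 2))
      - kron i k * ((Γ j 0 0 + Γ j 1 1 + Γ j 2 2) - (Γ 0 j 0 + Γ 1 j 1 + Γ 2 j 2)) := by
  fin_cases i <;> fin_cases j <;> fin_cases k <;> simp [Theta3, kron, Fin.sum_univ_three] <;> ring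

lemma orth12 (T : Fin 3 → ℝ) (A : ℝ) :
    (∑ i, ∑ j, ∑ k : Fin 3, (kron i j * T k) * (levicivita k j i * A)) = 0 := by
  simp [Fin.sum_univ_three, kron, levicivita, Prod.ext_iff]

lemma orth13 (T B : Fin 3 → ℝ) :
    (∑ i, ∑ j, ∑ k : Fin 3, (kron i j * T k) * (kron j k * B i - kron i k * B j)) = 0 := by
  simp [Fin.sum_univ_three, kron]

lemma orth23 (A : ℝ) (B : Fin 3 → ℝ) :
    (∑ i, ∑ j, ∑ k : Fin 3, (levicivita k j i * A) * (kron j k * B i - kron i k * B j)) = 0 := by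
  simp [Fin.sum_univ_three, kron, levicivita, Prod.ext_iff]

/-- **Pairwise orthogonality of the contractions `Θᵃ ⋮ Γ`.** For all `3×3` matrices
`S, S̃` and `h, h̃ ∈ ℝ³`, with `Γ_{ijk} = S_{ij} h_k − S̃_{ij} h̃_k`, the third-order tensors
`Θ¹ ⋮ Γ`, `Θ² ⋮ Γ`, `Θ³ ⋮ Γ` are pairwise orthogonal. -/
theorem Theta_contractions_orthogonal (S S' : Matrix (Fin 3) (Fin 3) ℝ) (h h' : Fin 3 → ℝ)
    (Γ : Fin 3 → Fin 3 → Fin 3 → ℝ)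
    (hΓ : ∀ i j k, Γ i j k = S i j * h k - S' i j * h' k) :
    (∑ i, ∑ j, ∑ k, (∑ l, ∑ m, ∑ n, Theta1 i j k l m n * Γ l m n)
        * (∑ l, ∑ m, ∑ n, Theta2 i j k l m n * Γ l m n)) = 0 ∧
    (∑ i, ∑ j, ∑ k, (∑ l, ∑ m, ∑ n, Theta1 i j k l m n * Γ l m n)
        * (∑ l, ∑ m, ∑ n, Theta3 i j k l m n * Γ l m n)) = 0 ∧
    (∑ i, ∑ j, ∑ k, (∑ l, ∑ m, ∑ n, Theta2 i j k l m n * Γ l m n)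
        * (∑ l, ∑ m, ∑ n, Theta3 i j k l m n * Γ l m n)) = 0 := by
  simp only [c1, c2, c3]
  exact ⟨orth12 (fun k => Γ 0 0 k + Γ 1 1 k + Γ 2 2 k) _,
    orth13 (fun k => Γ 0 0 k + Γ 1 1 k + Γ 2 2 k)
      (fun i => (Γ i 0 0 + Γ i 1 1 + Γ i 2 2) - (Γ 0 i 0 + Γ 1 i 1 + Γ 2 i 2)),
    orth23 _ (fun i => (Γ i 0 0 + Γ i 1 1 + Γ i 2 2) - (Γ 0 i 0 + Γ 1 i 1 + Γ 2 i 2))⟩
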